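/- arXiv:1107.3540 — 2 statements merged into one kernel-verified Lean document; each statement's English description precedes it below -/
import Mathlib

section
/- For every real k ≠ 0, one has ξ(k) − ω(k)⁴ ≠ 0, and there exists a continuously differentiable function ψ : ℝ → ℂ that is twice differentiable at every x ∉ {−b, 0} and satisfies −ψ''(x) + V(x)ψ(x) = k²ψ(x) for all x ∉ {−b, 0}, together with ψ(x) = e^{ikx} + L(k)e^{−ikx} for all x ≤ −b and ψ(x) = T(k)e^{ikx} for all x ≥ 0. (This exhibits L(k) and T(k) as the left reflection and transmission coefficients of the block potential V.) -/
open Complex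

/-- `ω(k) = k/a + ((k/a)² + 1)^{1/2}` with the principal branch of the square root. -/
noncomputable def omg (a : ℝ) (k : ℂ) : ℂ :=
  k / (a : ℂ) + ((k / (a : ℂ)) ^ 2 + 1) ^ ((1 : ℂ) / 2)

/-- `ξ(k) = exp(i·a·b·(ω(k) + 1/ω(k)))`. -/
noncomputable def xi (a b : ℝ) (k : ℂ) : ℂ :=
  Complex.exp (Complex.I * (a : ℂ) * (b : ℂ) * (omg a k + 1 / omg a k))

/-- Right reflection coefficient of the block potential `−a²·χ_{[−b,0]}`. -/
noncomputable def Rcoef (a b : ℝ) (k : ℂ) : ℂ :=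
  omg a k ^ 2 * (1 - xi a b k) / (xi a b k - omg a k ^ 4)

/-- Left reflection coefficient of the block potential `−a²·χ_{[−b,0]}`. -/
noncomputable def Lcoef (a b : ℝ) (k : ℂ) : ℂ :=
  Rcoef a b k * Complex.exp (-Complex.I * (a : ℂ) * (b : ℂ) * (omg a k - 1 / omg a k))

/-- Transmission coefficient of the block potential `−a²·χ_{[−b,0]}`. -/
noncomputable def Tcoef (a b : ℝ) (k : ℂ) : ℂ :=
  (1 - omg a k ^ 4) / (xi a b k - omg a k ^ 4) * Complex.exp (Complex.I * (a : ℂ) * (b : ℂ) / omg a k)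

/-- The block (well) potential `V = −a²·χ_{[−b,0]}`, complex-valued. -/
noncomputable def Vblock (a b : ℝ) (x : ℝ) : ℂ :=
  if -b ≤ x ∧ x ≤ 0 then -(a : ℂ) ^ 2 else 0

/-!
Write `ω = ω(k)`. Since `ω · (((k/a)² + 1)^{1/2} − k/a) = 1`, we have `ω − ω⁻¹ = 2k/a`, and
`κ := a (ω + ω⁻¹)/2` satisfies `κ² = k² + a²`; moreover `ξ = e^{2iκb}`, `e^{iab/ω} = e^{i(κ−k)b}`
and `e^{−iab(ω − ω⁻¹)} = e^{−2ikb}`. For real `k ≠ 0` the number `ω` is real, so `|ξ| = 1`,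
and `ξ = ω⁴` would give `ω = ±1`, i.e. `k = 0`.

The solution is glued from plane waves: `e^{ikx} + L e^{−ikx}` left of the well,
`A e^{iκx} + B e^{−iκx}` inside it and `T e^{ikx}` to the right. With the above identities, the
coefficients `L(k)` and `T(k)` are exactly those for which values and derivatives agree at
`−b` and `0`, and gluing smooth functions that agree to first order gives a `C¹` function that
coincides with one of the plane waves near every point other than `−b` and `0`.
-/

open Filter Topology

section Glue

variable {F : Type*} {c x : ℝ} {f g : ℝ → F}

noncomputable def glue (c : ℝ) (f g : ℝ → F) (x : ℝ) : F := if x ≤ c then f x else g x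

theorem glue_of_le (h : x ≤ c) : glue c f g x = f x := if_pos h

theorem glue_of_lt (h : c < x) : glue c f g x = g x := if_neg h.not_ge

theorem glue_eq_right_of_le (hval : f c = g c) (h : c ≤ x) : glue c f g x = g x := by
  rcases h.eq_or_lt with rfl | h
  · rw [glue_of_le le_rfl, hval]
  · exact glue_of_lt h

theorem glue_eventuallyEq_left (h : x < c) : glue c f g =ᶠ[𝓝 x] f := by
  filter_upwards [Iio_mem_nhds h] with y hy using glue_of_le hy.le

theorem glue_eventuallyEq_right (h : c < x) : glue c f g =ᶠ[𝓝 x] g := by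
  filter_upwards [Ioi_mem_nhds h] with y hy using glue_of_lt hy

variable [NormedAddCommGroup F] [NormedSpace ℝ F]

theorem hasDerivAt_glue (hf : Differentiable ℝ f) (hg : Differentiable ℝ g)
    (hval : f c = g c) (hder : deriv f c = deriv g c) (x : ℝ) :
    HasDerivAt (glue c f g) (glue c (deriv f) (deriv g) x) x := by
  rcases lt_trichotomy x c with h | rfl | h
  · rw [glue_of_le h.le]
    exact (hf x).hasDerivAt.congr_of_eventuallyEq (glue_eventuallyEq_left h)
  · rw [glue_of_le le_rfl]
    have hleft : HasDerivWithinAt (glue x f g) (deriv f x) (Set.Iic x) x :=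
      (hf x).hasDerivAt.hasDerivWithinAt.congr (fun y hy => glue_of_le hy) (glue_of_le le_rfl)
    have hright : HasDerivWithinAt (glue x f g) (deriv f x) (Set.Ici x) x := by
      rw [hder]
      exact (hg x).hasDerivAt.hasDerivWithinAt.congr (fun y hy => glue_eq_right_of_le hval hy)
        (glue_eq_right_of_le hval le_rfl)
    simpa using hleft.union hright
  · rw [glue_of_lt h]
    exact (hg x).hasDerivAt.congr_of_eventuallyEq (glue_eventuallyEq_right h)

theorem deriv_glue (hf : Differentiable ℝ f) (hg : Differentiable ℝ g)
    (hval : f c = g c) (hder : deriv f c = deriv g c) :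
    deriv (glue c f g) = glue c (deriv f) (deriv g) :=
  funext fun x => (hasDerivAt_glue hf hg hval hder x).deriv

theorem contDiff_one_glue (hf : ContDiff ℝ 1 f) (hg : ContDiff ℝ 1 g)
    (hval : f c = g c) (hder : deriv f c = deriv g c) : ContDiff ℝ 1 (glue c f g) := by
  rw [contDiff_one_iff_deriv] at hf hg ⊢
  refine ⟨fun x => (hasDerivAt_glue hf.1 hg.1 hval hder x).differentiableAt, ?_⟩
  rw [deriv_glue hf.1 hg.1 hval hder]
  exact hf.2.if_le hg.2 continuous_id continuous_const fun x hx => hx ▸ hder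

end Glue

section PlaneWave

noncomputable def planeWave (c₁ c₂ μ : ℂ) (x : ℝ) : ℂ :=
  c₁ * exp (I * μ * x) + c₂ * exp (-I * μ * x)

variable (c₁ c₂ μ : ℂ)

theorem hasDerivAt_planeWave (x : ℝ) :
    HasDerivAt (planeWave c₁ c₂ μ) (planeWave (I * μ * c₁) (-I * μ * c₂) μ x) x := by
  have hlin (ν : ℂ) : HasDerivAt (fun y : ℝ => ν * y) ν x := by
    simpa using (hasDerivAt_id x).ofReal_comp.const_mul ν
  refine (((hlin (I * μ)).cexp.const_mul c₁).add
    ((hlin (-I * μ)).cexp.const_mul c₂)).congr_deriv ?_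
  simp only [planeWave]; ring

theorem deriv_planeWave :
    deriv (planeWave c₁ c₂ μ) = planeWave (I * μ * c₁) (-I * μ * c₂) μ :=
  funext fun x => (hasDerivAt_planeWave c₁ c₂ μ x).deriv

theorem differentiable_planeWave : Differentiable ℝ (planeWave c₁ c₂ μ) :=
  fun x => (hasDerivAt_planeWave c₁ c₂ μ x).differentiableAt

theorem contDiff_one_planeWave : ContDiff ℝ 1 (planeWave c₁ c₂ μ) := by
  rw [contDiff_one_iff_deriv, deriv_planeWave]
  exact ⟨differentiable_planeWave _ _ _, (differentiable_planeWave _ _ _).continuous⟩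

theorem deriv_deriv_planeWave (x : ℝ) :
    deriv (deriv (planeWave c₁ c₂ μ)) x = -μ ^ 2 * planeWave c₁ c₂ μ x := by
  simp only [deriv_planeWave, planeWave]
  linear_combination μ ^ 2 * (c₁ * exp (I * μ * x) + c₂ * exp (-I * μ * x)) * I_sq

theorem planeWave_zero : planeWave c₁ c₂ μ 0 = c₁ + c₂ := by simp [planeWave]

theorem planeWave_neg (x : ℝ) :
    planeWave c₁ c₂ μ (-x) = c₁ * (exp (I * μ * x))⁻¹ + c₂ * exp (I * μ * x) := by
  simp only [planeWave, ← exp_neg]; push_cast; ring_nf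

theorem schrodinger_of_eventuallyEq_planeWave {ψ : ℝ → ℂ} {x : ℝ} {V k : ℂ}
    (h : ψ =ᶠ[𝓝 x] planeWave c₁ c₂ μ) (hμ : μ ^ 2 + V = k ^ 2) :
    DifferentiableAt ℝ (deriv ψ) x ∧ -(deriv (deriv ψ) x) + V * ψ x = k ^ 2 * ψ x := by
  refine ⟨?_, ?_⟩
  · rw [h.deriv.differentiableAt_iff, deriv_planeWave]
    exact differentiable_planeWave _ _ _ x
  · rw [h.deriv.deriv_eq, deriv_deriv_planeWave, h.eq_of_nhds]
    linear_combination planeWave c₁ c₂ μ x * hμ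

end PlaneWave

section Omega

variable (a b : ℝ) (k : ℂ)

theorem omg_mul_sqrt_sub_eq_one :
    omg a k * (((k / a) ^ 2 + 1) ^ ((1 : ℂ) / 2) - k / a) = 1 := by
  have hsq : (((k / a) ^ 2 + 1) ^ ((1 : ℂ) / 2)) ^ 2 = (k / a) ^ 2 + 1 := by
    rw [one_div]; exact_mod_cast cpow_nat_inv_pow _ two_ne_zero
  rw [omg]; linear_combination hsq

theorem omg_ne_zero : omg a k ≠ 0 := left_ne_zero_of_mul_eq_one (omg_mul_sqrt_sub_eq_one a k)

theorem omg_sub_inv : omg a k - (omg a k)⁻¹ = 2 * k / a := by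
  rw [← eq_inv_of_mul_eq_one_right (omg_mul_sqrt_sub_eq_one a k), omg]; ring

noncomputable def wellWaveNumber : ℂ := a * (omg a k + (omg a k)⁻¹) / 2

variable {a}

theorem mul_omg_sub_inv (ha : a ≠ 0) : a * (omg a k - (omg a k)⁻¹) / 2 = k := by
  have : (a : ℂ) ≠ 0 := ofReal_ne_zero.mpr ha
  rw [omg_sub_inv]; field_simp

theorem wellWaveNumber_sq (ha : a ≠ 0) : wellWaveNumber a k ^ 2 = k ^ 2 + a ^ 2 := by
  rw [wellWaveNumber]
  linear_combination (a : ℂ) ^ 2 * mul_inv_cancel₀ (omg_ne_zero a k) +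
    ((a : ℂ) * (omg a k - (omg a k)⁻¹) / 2 + k) * mul_omg_sub_inv k ha

theorem omg_sq_add_one_ne_zero (ha : a ≠ 0) (hk : k ^ 2 + a ^ 2 ≠ 0) : omg a k ^ 2 + 1 ≠ 0 := by
  intro h
  have hκ : wellWaveNumber a k * (2 * omg a k) = 0 := by
    rw [wellWaveNumber]
    linear_combination (a : ℂ) * h + (a : ℂ) * mul_inv_cancel₀ (omg_ne_zero a k)
  rw [mul_eq_zero, or_iff_left (mul_ne_zero two_ne_zero (omg_ne_zero a k))] at hκ
  exact hk (by rw [← wellWaveNumber_sq k ha, hκ, zero_pow two_ne_zero])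

theorem xi_eq_exp_sq : xi a b k = exp (I * wellWaveNumber a k * b) ^ 2 := by
  rw [xi, ← exp_nat_mul, wellWaveNumber, one_div]; congr 1; push_cast; ring

theorem Tcoef_eq (ha : a ≠ 0) : Tcoef a b k = (1 - omg a k ^ 4) / (xi a b k - omg a k ^ 4) *
    (exp (I * wellWaveNumber a k * b) * (exp (I * k * b))⁻¹) := by
  rw [Tcoef, ← exp_neg, ← exp_add, wellWaveNumber]
  congr 2
  linear_combination (-I * b) * mul_omg_sub_inv k ha

theorem Lcoef_eq (ha : a ≠ 0) : Lcoef a b k =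
    omg a k ^ 2 * (1 - xi a b k) / (xi a b k - omg a k ^ 4) * (exp (I * k * b))⁻¹ ^ 2 := by
  rw [Lcoef, Rcoef, ← exp_neg, ← exp_nat_mul, one_div]
  congr 2
  push_cast
  linear_combination (-2 * I * b) * mul_omg_sub_inv k ha

end Omega

theorem exists_omg_eq_ofReal (a k : ℝ) : ∃ r : ℝ, omg a k = r :=
  ⟨k / a + ((k / a) ^ 2 + 1) ^ (1 / 2 : ℝ), by
    rw [omg, ofReal_add, ofReal_cpow (by positivity)]; push_cast; rfl⟩

theorem xi_sub_omg_pow_four_ne_zero {a : ℝ} (ha : a ≠ 0) (b : ℝ) {k : ℝ} (hk : k ≠ 0) :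
    xi a b k - omg a k ^ 4 ≠ 0 := by
  obtain ⟨r, hr⟩ := exists_omg_eq_ofReal a k
  have hxi : ‖xi a b k‖ = 1 := by
    rw [xi, hr, show I * a * b * (r + 1 / r) = ((a * b * (r + 1 / r) : ℝ) : ℂ) * I by
      push_cast; ring]
    exact norm_exp_ofReal_mul_I _
  intro h
  have hr_abs : |r| = 1 := by
    rw [← Real.norm_eq_abs, ← norm_real, ← hr]
    refine (pow_eq_one_iff_of_nonneg (norm_nonneg _) four_ne_zero).mp ?_
    rw [← norm_pow, ← sub_eq_zero.mp h, hxi]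
  have hr_inv : r⁻¹ = r := inv_eq_of_mul_eq_one_right (by rw [← abs_mul_abs_self, hr_abs, one_mul])
  have hk_zero := omg_sub_inv a k
  rw [hr, ← ofReal_inv, hr_inv, sub_self, eq_comm, div_eq_zero_iff] at hk_zero
  simp [hk, ha] at hk_zero

theorem exists_planeWave_matching {a : ℝ} (ha : a ≠ 0) (b : ℝ) {k : ℂ}
    (hk : k ^ 2 + a ^ 2 ≠ 0) (hD : xi a b k - omg a k ^ 4 ≠ 0) :
    ∃ A B : ℂ,
      planeWave 1 (Lcoef a b k) k (-b) = planeWave A B (wellWaveNumber a k) (-b) ∧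
      deriv (planeWave 1 (Lcoef a b k) k) (-b) = deriv (planeWave A B (wellWaveNumber a k)) (-b) ∧
      planeWave A B (wellWaveNumber a k) 0 = planeWave (Tcoef a b k) 0 k 0 ∧
      deriv (planeWave A B (wellWaveNumber a k)) 0 = deriv (planeWave (Tcoef a b k) 0 k) 0 := by
  have hw := omg_ne_zero a k
  have hw2 := omg_sq_add_one_ne_zero k ha hk
  have hk_eq := mul_omg_sub_inv k ha
  -- `A` and `B` solve the matching conditions at `0`: `A + B = T`, `κ (A − B) = k T`.
  refine ⟨Tcoef a b k * omg a k ^ 2 / (omg a k ^ 2 + 1), Tcoef a b k / (omg a k ^ 2 + 1), ?_⟩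
  rw [Tcoef_eq b k ha, Lcoef_eq b k ha, xi_eq_exp_sq]
  rw [xi_eq_exp_sq] at hD
  simp only [deriv_planeWave, planeWave_neg, planeWave_zero]
  have hE := exp_ne_zero (I * wellWaveNumber a k * b)
  have hF := exp_ne_zero (I * k * b)
  generalize exp (I * wellWaveNumber a k * b) = E at *
  generalize exp (I * k * b) = F at *
  rw [wellWaveNumber]
  generalize omg a k = w at *
  subst hk_eq
  refine ⟨?_, ?_, ?_, ?_⟩ <;> field_simp <;> ring

def IsLeftScatteringSolution (a b : ℝ) (k L T : ℂ) (ψ : ℝ → ℂ) : Prop :=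
  ContDiff ℝ 1 ψ ∧
    (∀ x : ℝ, x ∉ ({-b, 0} : Set ℝ) → DifferentiableAt ℝ (deriv ψ) x) ∧
    (∀ x : ℝ, x ∉ ({-b, 0} : Set ℝ) → -(deriv (deriv ψ) x) + Vblock a b x * ψ x = k ^ 2 * ψ x) ∧
    (∀ x : ℝ, x ≤ -b → ψ x = exp (I * k * x) + L * exp (-I * k * x)) ∧
    (∀ x : ℝ, 0 ≤ x → ψ x = T * exp (I * k * x))

theorem isLeftScatteringSolution_glue {a b : ℝ} (hb : 0 < b) {k κ L T A B : ℂ}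
    (hκ : κ ^ 2 = k ^ 2 + a ^ 2)
    (hval_b : planeWave 1 L k (-b) = planeWave A B κ (-b))
    (hder_b : deriv (planeWave 1 L k) (-b) = deriv (planeWave A B κ) (-b))
    (hval_0 : planeWave A B κ 0 = planeWave T 0 k 0)
    (hder_0 : deriv (planeWave A B κ) 0 = deriv (planeWave T 0 k) 0) :
    IsLeftScatteringSolution a b k L T
      (glue (-b) (planeWave 1 L k) (glue 0 (planeWave A B κ) (planeWave T 0 k))) := by
  set inner := glue 0 (planeWave A B κ) (planeWave T 0 k)
  set ψ := glue (-b) (planeWave 1 L k) inner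
  have hb0 : -b ≤ 0 := by linarith
  have hinner_b : inner (-b) = planeWave A B κ (-b) := glue_of_le hb0
  have hinner_der_b : deriv inner (-b) = deriv (planeWave A B κ) (-b) := by
    rw [deriv_glue (differentiable_planeWave _ _ _) (differentiable_planeWave _ _ _) hval_0 hder_0,
      glue_of_le hb0]
  have hsolves : ∀ x : ℝ, x ∉ ({-b, 0} : Set ℝ) → DifferentiableAt ℝ (deriv ψ) x ∧
      -(deriv (deriv ψ) x) + Vblock a b x * ψ x = k ^ 2 * ψ x := by
    intro x hx
    simp only [Set.mem_insert_iff, Set.mem_singleton_iff, not_or] at hx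
    rcases lt_or_gt_of_ne hx.1 with hxb | hxb
    · rw [Vblock, if_neg (by intro h; linarith [h.1])]
      exact schrodinger_of_eventuallyEq_planeWave _ _ _ (glue_eventuallyEq_left hxb) (by ring)
    rcases lt_or_gt_of_ne hx.2 with hx0 | hx0
    · rw [Vblock, if_pos ⟨hxb.le, hx0.le⟩]
      exact schrodinger_of_eventuallyEq_planeWave _ _ _
        ((glue_eventuallyEq_right hxb).trans (glue_eventuallyEq_left hx0))
        (by linear_combination hκ)
    · rw [Vblock, if_neg (by intro h; linarith [h.2])]
      exact schrodinger_of_eventuallyEq_planeWave _ _ _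
        ((glue_eventuallyEq_right (by linarith)).trans (glue_eventuallyEq_right hx0)) (by ring)
  refine ⟨contDiff_one_glue (contDiff_one_planeWave _ _ _)
    (contDiff_one_glue (contDiff_one_planeWave _ _ _) (contDiff_one_planeWave _ _ _) hval_0 hder_0)
    (hval_b.trans hinner_b.symm) (hder_b.trans hinner_der_b.symm),
    fun x hx => (hsolves x hx).1, fun x hx => (hsolves x hx).2, fun x hx => ?_, fun x hx => ?_⟩
  · exact (glue_of_le hx).trans (by rw [planeWave, one_mul])
  · exact (glue_of_lt (by linarith)).trans <|
      (glue_eq_right_of_le hval_0 hx).trans (by rw [planeWave, zero_mul, add_zero])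

theorem exists_isLeftScatteringSolution {a b : ℝ} (ha : a ≠ 0) (hb : 0 < b) {k : ℂ}
    (hk : k ^ 2 + a ^ 2 ≠ 0) (hD : xi a b k - omg a k ^ 4 ≠ 0) :
    ∃ ψ, IsLeftScatteringSolution a b k (Lcoef a b k) (Tcoef a b k) ψ := by
  obtain ⟨A, B, hval_b, hder_b, hval_0, hder_0⟩ := exists_planeWave_matching ha b hk hD
  exact ⟨_, isLeftScatteringSolution_glue hb (wellWaveNumber_sq k ha) hval_b hder_b hval_0 hder_0⟩


/-- For real `k ≠ 0`, `ξ(k) − ω(k)⁴ ≠ 0`, and the block potential has a left Jost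
solution exhibiting `L(k)` and `T(k)` as the left reflection and transmission
coefficients. -/
theorem block_left_jost (a b : ℝ) (ha : 0 < a) (hb : 0 < b) (k : ℝ) (hk : k ≠ 0) :
    xi a b (k : ℂ) - omg a (k : ℂ) ^ 4 ≠ 0 ∧
    ∃ ψ : ℝ → ℂ, ContDiff ℝ 1 ψ ∧
      (∀ x : ℝ, x ∉ ({-b, 0} : Set ℝ) → DifferentiableAt ℝ (deriv ψ) x) ∧
      (∀ x : ℝ, x ∉ ({-b, 0} : Set ℝ) →
        -(deriv (deriv ψ) x) + Vblock a b x * ψ x = (k : ℂ) ^ 2 * ψ x) ∧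
      (∀ x : ℝ, x ≤ -b →
        ψ x = Complex.exp (Complex.I * (k : ℂ) * (x : ℂ)) +
          Lcoef a b (k : ℂ) * Complex.exp (-Complex.I * (k : ℂ) * (x : ℂ))) ∧
      (∀ x : ℝ, 0 ≤ x →
        ψ x = Tcoef a b (k : ℂ) * Complex.exp (Complex.I * (k : ℂ) * (x : ℂ))) := by
  have hD := xi_sub_omg_pow_four_ne_zero ha.ne' b hk
  have hk_a : (k : ℂ) ^ 2 + (a : ℂ) ^ 2 ≠ 0 := by exact_mod_cast (by positivity : k ^ 2 + a ^ 2 ≠ 0)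
  exact ⟨hD, exists_isLeftScatteringSolution ha.ne' hb hk_a hD⟩
end

section
/- Let 0 < κ < a and set σ = √(1 − (κ/a)²). The following are equivalent: (i) there exists a function φ : ℝ → ℝ, not identically zero, continuously differentiable on ℝ, twice differentiable at every x ∉ {−b, 0}, square-integrable on ℝ, and satisfying −φ''(x) + V(x)φ(x) = −κ²φ(x) for all x ∉ {−b, 0}; (ii) the quantity (ab/π)·σ − (2/π)·arctan(κ/(aσ)) is buna nonnegative integer. That is, −κ² is a bound state of the Schrödinger operator with the block potential V exactly when this transcendental equation holds. -/
/-!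
Outside the well a square-integrable solution of `φ'' = κ²φ` cannot contain the growing
exponential, so `φ'(0) = -κ φ(0)`; since the reflection `x ↦ -b - x` preserves the well, also
`φ'(-b) = κ φ(-b)`. Inside the well `φ'' = -k²φ` with `k = aσ = √(a² - κ²)`, so `φ` is `φ(-b)`
times the solution with initial data `(1, κ)` at `-b`. For that solution the condition at `0`
reads `sin (kb - 2 arctan (κ/k)) = 0`, and `kb - 2 arctan (κ/k) > -π` makes the multiple of `π`
a natural number. Conversely, attaching the two exponential tails to that solution yields a
bound state.
-/

open MeasureTheory

/-- The block (well) potential `V = −a²·χ_{[−b,0]}`, real-valued. -/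
noncomputable def VblockR (a b : ℝ) (x : ℝ) : ℝ :=
  if -b ≤ x ∧ x ≤ 0 then -a ^ 2 else 0

open Set Real Filter Topology

theorem eq_left_of_hasDerivAt_zero {f : ℝ → ℝ} {u v : ℝ} (hf : ContinuousOn f (Icc u v))
    (hf' : ∀ x ∈ Ioo u v, HasDerivAt f 0 x) : ∀ x ∈ Icc u v, f x = f u := by
  rintro x ⟨hux, hxv⟩
  rcases hux.eq_or_lt with rfl | hux
  · rfl
  obtain ⟨c, -, hc⟩ := exists_hasDerivAt_eq_slope f (fun _ => 0) hux
    (hf.mono (Icc_subset_Icc_right hxv)) fun y hy => hf' y ⟨hy.1, hy.2.trans_le hxv⟩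
  rw [eq_comm, div_eq_zero_iff, sub_eq_zero, sub_eq_zero] at hc
  exact hc.resolve_right hux.ne'

theorem not_integrableOn_Ioi_of_tendsto_atTop {f : ℝ → ℝ} {a : ℝ} (hf : Tendsto f atTop atTop) :
    ¬ IntegrableOn f (Ioi a) := by
  intro hint
  obtain ⟨M, hM⟩ := eventually_atTop.1 (hf.eventually_ge_atTop 1)
  have hsub : Ioi (max a M) ⊆ {x | 1 ≤ ‖f x‖} ∩ Ioi a := fun x hx =>
    ⟨(hM x (le_max_right a M |>.trans hx.le)).trans (le_abs_self _),
      (le_max_left a M).trans_lt hx⟩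
  have := ((measure_mono hsub).trans (Measure.le_restrict_apply _ _)).trans_lt
    (hint.measure_norm_ge_lt_top one_pos)
  simp at this

theorem sin_eq_zero_iff_exists_nat {θ : ℝ} (hθ : -π < θ) :
    sin θ = 0 ↔ ∃ m : ℕ, θ = m * π := by
  refine ⟨fun h => ?_, fun ⟨m, hm⟩ => hm ▸ sin_nat_mul_pi m⟩
  obtain ⟨n, rfl⟩ := sin_eq_zero_iff.1 h
  have hn : -1 < n := by
    have : ((-1 : ℤ) : ℝ) * π < n * π := by simpa using hθ
    exact_mod_cast lt_of_mul_lt_mul_right this pi_pos.le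
  lift n to ℕ using by omega
  exact ⟨n, by simp⟩

theorem sin_sub_two_arctan_div {k : ℝ} (hk : k ≠ 0) (κ θ : ℝ) :
    (k ^ 2 + κ ^ 2) * sin (θ - 2 * arctan (κ / k)) =
      (k ^ 2 - κ ^ 2) * sin θ - 2 * κ * k * cos θ := by
  have hc : cos (arctan (κ / k)) ^ 2 * (1 + (κ / k) ^ 2) = 1 := by
    rw [cos_arctan, div_pow, sq_sqrt (by positivity)]
    field_simp
  have hs : sin (arctan (κ / k)) = κ / k * cos (arctan (κ / k)) := by
    rw [sin_arctan, cos_arctan]; ring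
  rw [sin_sub, cos_two_mul, sin_two_mul, hs]
  field_simp at hc ⊢
  linear_combination (2 * k * sin θ - 2 * κ * cos θ) * hc

theorem hasDerivAt_ite_le_of_ne {f g : ℝ → ℝ} {f' g' c x : ℝ} (hx : x ≠ c)
    (hf : HasDerivAt f f' x) (hg : HasDerivAt g g' x) :
    HasDerivAt (fun y => if y ≤ c then f y else g y) (if x ≤ c then f' else g') x := by
  rcases hx.lt_or_gt with hx | hx
  · rw [if_pos hx.le]
    exact hf.congr_of_eventuallyEq <|
      eventually_of_mem (Iio_mem_nhds hx) fun y hy => if_pos hy.le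
  · rw [if_neg hx.not_ge]
    exact hg.congr_of_eventuallyEq <|
      eventually_of_mem (Ioi_mem_nhds hx) fun y hy => if_neg hy.not_ge

theorem hasDerivAt_ite_le {f g f' g' : ℝ → ℝ} {c : ℝ} (hf : ∀ x, HasDerivAt f (f' x) x)
    (hg : ∀ x, HasDerivAt g (g' x) x) (h₀ : f c = g c) (h₁ : f' c = g' c) (x : ℝ) :
    HasDerivAt (fun y => if y ≤ c then f y else g y) (if x ≤ c then f' x else g' x) x := by
  rcases ne_or_eq x c with hx | rfl
  · exact hasDerivAt_ite_le_of_ne hx (hf x) (hg x)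
  have hle : HasDerivWithinAt (fun y => if y ≤ x then f y else g y) (f' x) (Iic x) x :=
    (hf x).hasDerivWithinAt.congr (fun y hy => if_pos hy) (if_pos le_rfl)
  have hge : HasDerivWithinAt (fun y => if y ≤ x then f y else g y) (f' x) (Ici x) x := by
    refine h₁ ▸ (hg x).hasDerivWithinAt.congr (fun y hy => ?_) (by rw [if_pos le_rfl, h₀])
    rcases (mem_Ici.1 hy).eq_or_lt with rfl | hlt
    · rw [if_pos le_rfl, h₀]
    · rw [if_neg hlt.not_ge]
  rw [if_pos le_rfl, ← hasDerivWithinAt_univ, ← Iic_union_Ici]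
  exact hle.union hge

theorem hasDerivAt_exp_mul (c x : ℝ) : HasDerivAt (fun y => exp (c * y)) (c * exp (c * x)) x := by
  simpa [mul_comm] using ((hasDerivAt_id x).const_mul c).exp

theorem eq_zero_of_sq_integrableOn_Ioi {φ : ℝ → ℝ} {κ A B : ℝ} (hκ : 0 < κ)
    (hφ : ∀ x ∈ Ici (0 : ℝ), φ x = A * exp (κ * x) + B * exp (-κ * x))
    (hint : IntegrableOn (fun x => φ x ^ 2) (Ioi 0)) : A = 0 := by
  by_contra hA
  refine not_integrableOn_Ioi_of_tendsto_atTop ?_ hint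
  have hlim : Tendsto (fun x => (A + B * exp (-(2 * κ) * x)) ^ 2) atTop (𝓝 (A ^ 2)) := by
    have := tendsto_exp_neg_atTop_nhds_zero.comp (tendsto_id.const_mul_atTop (by positivity :
      0 < 2 * κ))
    simpa using ((this.const_mul B).const_add A).pow 2
  have hexp := tendsto_exp_atTop.comp (tendsto_id.const_mul_atTop (by positivity : 0 < 2 * κ))
  refine (hexp.atTop_mul_pos (by positivity) hlim).congr' ?_
  filter_upwards [eventually_ge_atTop 0] with x hx
  have h₁ : exp (κ * x) * exp (-κ * x) = 1 := by rw [← exp_add]; simp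
  have h₂ : exp (2 * κ * x) = exp (κ * x) ^ 2 := by rw [sq, ← exp_add]; ring_nf
  have h₃ : exp (-(2 * κ) * x) = exp (-κ * x) ^ 2 := by rw [sq, ← exp_add]; ring_nf
  simp only [Function.comp_apply, id, h₂, h₃, hφ x hx]
  linear_combination B * exp (-κ * x) *
    (2 * A * exp (κ * x) + B * exp (-κ * x) * (exp (κ * x) * exp (-κ * x) + 1)) * h₁

theorem eq_mul_exp_neg_of_sq_integrableOn_Ioi {φ φ' : ℝ → ℝ} {κ : ℝ} (hκ : 0 < κ)
    (hφ : ∀ x ∈ Ici (0 : ℝ), HasDerivAt φ (φ' x) x) (hφ'c : ContinuousOn φ' (Ici 0))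
    (hφ' : ∀ x ∈ Ioi (0 : ℝ), HasDerivAt φ' (κ ^ 2 * φ x) x)
    (hint : IntegrableOn (fun x => φ x ^ 2) (Ioi 0)) :
    φ' 0 = -κ * φ 0 ∧ ∀ x ∈ Ici (0 : ℝ), φ x = φ 0 * exp (-κ * x) := by
  have hφc : ContinuousOn φ (Ici 0) := fun x hx => (hφ x hx).continuousAt.continuousWithinAt
  have hconst : ∀ F : ℝ → ℝ, ContinuousOn F (Ici 0) → (∀ x ∈ Ioi (0 : ℝ), HasDerivAt F 0 x) →
      ∀ x ∈ Ici (0 : ℝ), F x = F 0 := fun F hF hF' x hx =>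
    eq_left_of_hasDerivAt_zero (hF.mono Icc_subset_Ici_self) (fun y hy => hF' y hy.1) x ⟨hx, le_rfl⟩
  -- `(φ' ± κφ)' = ±κ (φ' ± κφ)`, so `A` and `B` are constant
  set A : ℝ → ℝ := fun x => (φ' x + κ * φ x) * exp (-κ * x)
  set B : ℝ → ℝ := fun x => (κ * φ x - φ' x) * exp (κ * x)
  have hA := hconst A (by fun_prop) fun x hx => by
    refine (((hφ' x hx).fun_add ((hφ x (mem_Ioi.1 hx).le).const_mul κ)).fun_mul
      (hasDerivAt_exp_mul (-κ) x)).congr_deriv ?_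
    ring
  have hB := hconst B (by fun_prop) fun x hx => by
    refine ((((hφ x (mem_Ioi.1 hx).le).const_mul κ).fun_sub (hφ' x hx)).fun_mul
      (hasDerivAt_exp_mul κ x)).congr_deriv ?_
    ring
  have hrepr : ∀ x ∈ Ici (0 : ℝ), 2 * κ * φ x = A 0 * exp (κ * x) + B 0 * exp (-κ * x) := by
    intro x hx
    rw [← hA x hx, ← hB x hx]
    have := exp_add (κ * x) (-κ * x)
    simp only [A, B, neg_mul, add_neg_cancel, exp_zero] at this ⊢
    linear_combination (2 * κ * φ x) * this
  have hA0 : A 0 = 0 := eq_zero_of_sq_integrableOn_Ioi hκ hrepr <| by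
    have : IntegrableOn (fun x => (2 * κ) ^ 2 * φ x ^ 2) (Ioi 0) := hint.const_mul _
    simpa only [mul_pow] using this
  have hφ'0 : φ' 0 = -κ * φ 0 := by
    simp only [A, mul_zero, exp_zero, mul_one] at hA0
    linarith
  refine ⟨hφ'0, fun x hx => mul_left_cancel₀ (by positivity : 2 * κ ≠ 0) ?_⟩
  simp only [hrepr x hx, hA0, B, hφ'0, mul_zero, exp_zero, mul_one]
  ring

theorem eq_cos_sin_of_hasDerivAt {φ φ' : ℝ → ℝ} {k u v : ℝ} (hk : k ≠ 0)
    (hφ : ∀ x ∈ Icc u v, HasDerivAt φ (φ' x) x) (hφ'c : ContinuousOn φ' (Icc u v))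
    (hφ' : ∀ x ∈ Ioo u v, HasDerivAt φ' (-k ^ 2 * φ x) x) {x : ℝ} (hx : x ∈ Icc u v) :
    φ x = φ u * cos (k * (x - u)) + φ' u / k * sin (k * (x - u)) ∧
      φ' x = -k * φ u * sin (k * (x - u)) + φ' u * cos (k * (x - u)) := by
  have hφc : ContinuousOn φ (Icc u v) := fun x hx => (hφ x hx).continuousAt.continuousWithinAt
  have hcos (y : ℝ) : HasDerivAt (fun y => cos (k * (y - u))) (-k * sin (k * (y - u))) y := by
    simpa [mul_comm] using (((hasDerivAt_id y).sub_const u).const_mul k).cos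
  have hsin (y : ℝ) : HasDerivAt (fun y => sin (k * (y - u))) (k * cos (k * (y - u))) y := by
    simpa [mul_comm] using (((hasDerivAt_id y).sub_const u).const_mul k).sin
  -- the coordinates of `(φ, φ'/k)` in the rotating frame `(cos, sin)` are constant
  set C : ℝ → ℝ := fun y => φ y * cos (k * (y - u)) - φ' y / k * sin (k * (y - u))
  set D : ℝ → ℝ := fun y => φ y * sin (k * (y - u)) + φ' y / k * cos (k * (y - u))
  have hC := eq_left_of_hasDerivAt_zero (f := C) (by fun_prop) fun y hy => by
    refine (((hφ y (Ioo_subset_Icc_self hy)).fun_mul (hcos y)).fun_sub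
      (((hφ' y hy).div_const k).fun_mul (hsin y))).congr_deriv ?_
    field_simp
    ring
  have hD := eq_left_of_hasDerivAt_zero (f := D) (by fun_prop) fun y hy => by
    refine (((hφ y (Ioo_subset_Icc_self hy)).fun_mul (hsin y)).fun_add
      (((hφ' y hy).div_const k).fun_mul (hcos y))).congr_deriv ?_
    field_simp
    ring
  have hCx := hC x hx
  have hDx := hD x hx
  simp only [C, D, sub_self, mul_zero, cos_zero, sin_zero, mul_one] at hCx hDx
  have := sin_sq_add_cos_sq (k * (x - u))
  constructor
  · linear_combination cos (k * (x - u)) * hCx + sin (k * (x - u)) * hDx - φ x * this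
  · linear_combination (norm := skip) -k * sin (k * (x - u)) * hCx + k * cos (k * (x - u)) * hDx
      - φ' x * this
    field_simp
    ring

theorem VblockR_neg_sub (a b x : ℝ) : VblockR a b (-b - x) = VblockR a b x := by
  unfold VblockR
  congr 1
  apply propext
  constructor <;> rintro ⟨h₁, h₂⟩ <;> constructor <;> linarith

structure IsL2Solution (a b κ : ℝ) (φ φ' : ℝ → ℝ) : Prop where
  hasDerivAt : ∀ x, HasDerivAt φ (φ' x) x
  continuous_deriv : Continuous φ'
  hasDerivAt_deriv : ∀ x ∉ ({-b, 0} : Set ℝ), HasDerivAt φ' ((VblockR a b x + κ ^ 2) * φ x) x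
  integrable_sq : Integrable fun x => φ x ^ 2

section BlockPotential

variable {a b κ : ℝ} {φ φ' : ℝ → ℝ}

theorem exists_isL2Solution_iff :
    (∃ φ', IsL2Solution a b κ φ φ') ↔
      ContDiff ℝ 1 φ ∧ (∀ x : ℝ, x ∉ ({-b, 0} : Set ℝ) → DifferentiableAt ℝ (deriv φ) x) ∧
        Integrable (fun x : ℝ => (φ x) ^ 2) ∧
        (∀ x : ℝ, x ∉ ({-b, 0} : Set ℝ) →
          -(deriv (deriv φ) x) + VblockR a b x * φ x = -κ ^ 2 * φ x) := by
  constructor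
  · rintro ⟨φ', h⟩
    have hderiv : deriv φ = φ' := funext fun x => (h.hasDerivAt x).deriv
    refine ⟨contDiff_one_iff_deriv.2 ⟨fun x => (h.hasDerivAt x).differentiableAt,
      hderiv ▸ h.continuous_deriv⟩, fun x hx => hderiv ▸ (h.hasDerivAt_deriv x hx).differentiableAt,
      h.integrable_sq, fun x hx => ?_⟩
    rw [hderiv, (h.hasDerivAt_deriv x hx).deriv]
    ring
  · rintro ⟨hC, hd, hint, hode⟩
    exact ⟨deriv φ, fun x => (hC.differentiable one_ne_zero x).hasDerivAt,
      hC.continuous_deriv le_rfl,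
      fun x hx => (hd x hx).hasDerivAt.congr_deriv (by linarith [hode x hx]), hint⟩

theorem IsL2Solution.comp_neg_sub (h : IsL2Solution a b κ φ φ') :
    IsL2Solution a b κ (fun x => φ (-b - x)) (fun x => -φ' (-b - x)) where
  hasDerivAt x := (h.hasDerivAt (-b - x)).comp_const_sub (-b) x
  continuous_deriv := by have := h.continuous_deriv; fun_prop
  hasDerivAt_deriv x hx := by
    have hx' : -b - x ∉ ({-b, 0} : Set ℝ) := by
      simp only [mem_insert_iff, mem_singleton_iff, not_or] at hx ⊢
      constructor <;> intro h' <;> [exact hx.2 (by linarith); exact hx.1 (by linarith)]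
    simpa [VblockR_neg_sub] using ((h.hasDerivAt_deriv _ hx').comp_const_sub (-b) x).fun_neg
  integrable_sq := h.integrable_sq.comp_sub_left (-b)

theorem IsL2Solution.eq_mul_exp_neg (h : IsL2Solution a b κ φ φ') (hb : 0 ≤ b) (hκ : 0 < κ) :
    φ' 0 = -κ * φ 0 ∧ ∀ x ∈ Ici (0 : ℝ), φ x = φ 0 * exp (-κ * x) := by
  refine eq_mul_exp_neg_of_sq_integrableOn_Ioi hκ (fun x _ => h.hasDerivAt x)
    h.continuous_deriv.continuousOn (fun x hx => ?_) h.integrable_sq.integrableOn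
  have hx : (0 : ℝ) < x := hx
  have hV : VblockR a b x = 0 := if_neg fun h' => h'.2.not_gt hx
  refine (h.hasDerivAt_deriv x ?_).congr_deriv (by rw [hV, zero_add])
  simp only [mem_insert_iff, mem_singleton_iff, not_or]
  constructor <;> intro h' <;> linarith

variable {k : ℝ}

-- The solution inside the well with the initial data `(1, κ)` at `-b` imposed by the left tail.
noncomputable def wellMid (κ k b x : ℝ) : ℝ := cos (k * (x + b)) + κ / k * sin (k * (x + b))

noncomputable def wellMid' (κ k b x : ℝ) : ℝ := -k * sin (k * (x + b)) + κ * cos (k * (x + b))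

theorem IsL2Solution.eq_mul_wellMid (h : IsL2Solution a b κ φ φ') (hk : k ≠ 0)
    (hkκ : k ^ 2 = a ^ 2 - κ ^ 2) (h₀ : φ' (-b) = κ * φ (-b)) {x : ℝ} (hx : x ∈ Icc (-b) 0) :
    φ x = φ (-b) * wellMid κ k b x ∧ φ' x = φ (-b) * wellMid' κ k b x := by
  have hode : ∀ y ∈ Ioo (-b) 0, HasDerivAt φ' (-k ^ 2 * φ y) y := fun y hy => by
    have hV : VblockR a b y = -a ^ 2 := if_pos ⟨hy.1.le, hy.2.le⟩
    refine (h.hasDerivAt_deriv y ?_).congr_deriv (by rw [hV, hkκ]; ring)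
    simp only [mem_insert_iff, mem_singleton_iff, not_or]
    exact ⟨hy.1.ne', hy.2.ne⟩
  obtain ⟨h₁, h₂⟩ := eq_cos_sin_of_hasDerivAt hk (fun y _ => h.hasDerivAt y)
    h.continuous_deriv.continuousOn hode hx
  simp only [sub_neg_eq_add, h₀] at h₁ h₂
  constructor
  · rw [h₁, wellMid]; ring
  · rw [h₂, wellMid']; ring

theorem wellMid'_zero_eq_iff (b : ℝ) (hk : 0 < k) :
    wellMid' κ k b 0 = -κ * wellMid κ k b 0 ↔ sin (k * b - 2 * arctan (κ / k)) = 0 := by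
  have key : k * (wellMid' κ k b 0 + κ * wellMid κ k b 0) =
      -((k ^ 2 + κ ^ 2) * sin (k * b - 2 * arctan (κ / k))) := by
    rw [sin_sub_two_arctan_div hk.ne']
    simp only [wellMid, wellMid', zero_add]
    field_simp
    ring
  rw [neg_mul, eq_neg_iff_add_eq_zero, ← mul_right_inj' hk.ne', mul_zero, key, neg_eq_zero,
    mul_eq_zero, or_iff_right (by positivity)]

theorem IsL2Solution.wellMid'_zero_eq (h : IsL2Solution a b κ φ φ') (hφ : φ ≠ 0) (hb : 0 < b)
    (hκ : 0 < κ) (hk : k ≠ 0) (hkκ : k ^ 2 = a ^ 2 - κ ^ 2) :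
    wellMid' κ k b 0 = -κ * wellMid κ k b 0 := by
  obtain ⟨hR₀, hR⟩ := h.eq_mul_exp_neg hb.le hκ
  obtain ⟨hL₀, hL⟩ := h.comp_neg_sub.eq_mul_exp_neg hb.le hκ
  have hL₀' : φ' (-b) = κ * φ (-b) := by simpa using hL₀
  have hM := fun x (hx : x ∈ Icc (-b) 0) => h.eq_mul_wellMid hk hkκ hL₀' hx
  obtain ⟨h0, h0'⟩ := hM 0 ⟨by linarith, le_rfl⟩
  have hp : φ (-b) ≠ 0 := by
    refine fun hp => hφ (funext fun x => ?_)
    rcases le_or_gt x (-b) with hx | hx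
    · simpa [hp] using hL (-b - x) (by simp only [mem_Ici]; linarith)
    rcases le_or_gt x 0 with hx' | hx'
    · simp [(hM x ⟨hx.le, hx'⟩).1, hp]
    · simp [hR x hx'.le, h0, hp]
  rw [h0, h0'] at hR₀
  exact mul_left_cancel₀ hp (by linear_combination hR₀)

theorem hasDerivAt_wellMid (hk : k ≠ 0) (x : ℝ) :
    HasDerivAt (wellMid κ k b) (wellMid' κ k b x) x := by
  have h := (hasDerivAt_id x).add_const b |>.const_mul k
  refine (h.cos.fun_add (h.sin.const_mul (κ / k))).congr_deriv ?_
  simp only [wellMid', id]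
  field_simp

theorem hasDerivAt_wellMid' (hk : k ≠ 0) (x : ℝ) :
    HasDerivAt (wellMid' κ k b) (-k ^ 2 * wellMid κ k b x) x := by
  have h := (hasDerivAt_id x).add_const b |>.const_mul k
  refine ((h.sin.const_mul (-k)).fun_add (h.cos.const_mul κ)).congr_deriv ?_
  simp only [wellMid, id]
  field_simp
  ring

noncomputable def boundState (κ k b x : ℝ) : ℝ :=
  if x ≤ 0 then (if x ≤ -b then exp (κ * (x + b)) else wellMid κ k b x)
  else wellMid κ k b 0 * exp (-κ * x)

noncomputable def boundState' (κ k b x : ℝ) : ℝ :=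
  if x ≤ 0 then (if x ≤ -b then κ * exp (κ * (x + b)) else wellMid' κ k b x)
  else -κ * (wellMid κ k b 0 * exp (-κ * x))

theorem hasDerivAt_boundState (hb : 0 < b) (hk : k ≠ 0)
    (hmatch : wellMid' κ k b 0 = -κ * wellMid κ k b 0) (x : ℝ) :
    HasDerivAt (boundState κ k b) (boundState' κ k b x) x := by
  have hL (y : ℝ) : HasDerivAt (fun y => exp (κ * (y + b))) (κ * exp (κ * (y + b))) y := by
    simpa [mul_comm] using (((hasDerivAt_id y).add_const b).const_mul κ).exp
  have hR (y : ℝ) : HasDerivAt (fun y => wellMid κ k b 0 * exp (-κ * y))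
      (-κ * (wellMid κ k b 0 * exp (-κ * y))) y := by
    simpa [mul_comm, mul_left_comm] using (hasDerivAt_exp_mul (-κ) y).const_mul (wellMid κ k b 0)
  have hb' : ¬ (0 : ℝ) ≤ -b := by linarith
  exact hasDerivAt_ite_le (hasDerivAt_ite_le hL (hasDerivAt_wellMid hk) (by simp [wellMid])
    (by simp [wellMid'])) hR (by simp [hb']) (by simp [hb', hmatch]) x

theorem continuous_boundState' (hb : 0 < b) (hmatch : wellMid' κ k b 0 = -κ * wellMid κ k b 0) :
    Continuous (boundState' κ k b) := by
  have hb' : ¬ (0 : ℝ) ≤ -b := by linarith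
  refine Continuous.if_le (Continuous.if_le (by fun_prop) (by unfold wellMid'; fun_prop)
    continuous_id continuous_const fun x hx => ?_) (by fun_prop) continuous_id continuous_const
    fun x hx => ?_
  · simp [hx, wellMid']
  · simp [hx, hb', hmatch]

theorem hasDerivAt_boundState' (hb : 0 < b) (hk : k ≠ 0) (hkκ : k ^ 2 = a ^ 2 - κ ^ 2) {x : ℝ}
    (hx : x ∉ ({-b, 0} : Set ℝ)) :
    HasDerivAt (boundState' κ k b) ((VblockR a b x + κ ^ 2) * boundState κ k b x) x := by
  simp only [mem_insert_iff, mem_singleton_iff, not_or] at hx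
  have hL : HasDerivAt (fun y => κ * exp (κ * (y + b))) (κ * (κ * exp (κ * (x + b)))) x := by
    simpa [mul_comm] using ((((hasDerivAt_id x).add_const b).const_mul κ).exp).const_mul κ
  have hR : HasDerivAt (fun y => -κ * (wellMid κ k b 0 * exp (-κ * y)))
      (-κ * (wellMid κ k b 0 * (-κ * exp (-κ * x)))) x :=
    ((hasDerivAt_exp_mul (-κ) x).const_mul _).const_mul _
  refine (hasDerivAt_ite_le_of_ne hx.2 (hasDerivAt_ite_le_of_ne hx.1 hL
    (hasDerivAt_wellMid' hk x)) hR).congr_deriv ?_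
  unfold VblockR boundState
  rcases lt_or_gt_of_ne hx.1 with h₁ | h₁
  · simp [h₁.le, h₁.not_ge, (h₁.trans (neg_lt_zero.2 hb)).le]
    ring
  rcases lt_or_gt_of_ne hx.2 with h₂ | h₂
  · simp only [if_pos h₂.le, if_neg h₁.not_ge, if_pos (⟨h₁.le, h₂.le⟩ : -b ≤ x ∧ x ≤ 0), hkκ]
    ring
  · simp [h₂.not_ge]
    ring

theorem integrable_boundState_sq (hb : 0 < b) (hκ : 0 < κ) :
    Integrable fun x => boundState κ k b x ^ 2 := by
  rw [← integrableOn_univ, ← Iic_union_Ioi (a := (0 : ℝ)),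
    ← Iic_union_Ioc_eq_Iic (neg_nonpos.2 hb.le)]
  refine (IntegrableOn.union ?_ ?_).union ?_
  · refine IntegrableOn.congr_fun ((integrableOn_exp_mul_Iic (by positivity : 0 < 2 * κ)
      (-b)).const_mul (exp (2 * κ * b))) (fun x hx => ?_) measurableSet_Iic
    have hx : x ≤ -b := hx
    simp only [boundState, if_pos hx, if_pos (hx.trans (neg_nonpos.2 hb.le)), sq, ← exp_add]
    ring_nf
  · have : Continuous (wellMid κ k b) := by unfold wellMid; fun_prop
    refine ((this.pow 2).integrableOn_Icc.mono_set Ioc_subset_Icc_self).congr_fun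
      (fun x hx => ?_) measurableSet_Ioc
    simp [boundState, hx.2, hx.1.not_ge]
  · refine IntegrableOn.congr_fun ((integrableOn_exp_mul_Ioi (by linarith : -(2 * κ) < 0)
      0).const_mul (wellMid κ k b 0 ^ 2)) (fun x hx => ?_) measurableSet_Ioi
    have hx : ¬ x ≤ 0 := not_le.2 hx
    simp only [boundState, if_neg hx, mul_pow, sq (exp _), ← exp_add]
    ring_nf

theorem isL2Solution_boundState (hb : 0 < b) (hκ : 0 < κ) (hk : k ≠ 0)
    (hkκ : k ^ 2 = a ^ 2 - κ ^ 2) (hmatch : wellMid' κ k b 0 = -κ * wellMid κ k b 0) :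
    IsL2Solution a b κ (boundState κ k b) (boundState' κ k b) :=
  ⟨hasDerivAt_boundState hb hk hmatch, continuous_boundState' hb hmatch,
    fun _ hx => hasDerivAt_boundState' hb hk hkκ hx, integrable_boundState_sq hb hκ⟩

theorem boundState_ne_zero (hb : 0 < b) : boundState κ k b ≠ 0 := fun h => by
  simpa [boundState, hb.le] using congr_fun h (-b)

end BlockPotential

/-- `−κ²` is a bound state of the Schrödinger operator with the block potential
exactly when `(ab/π)σ − (2/π)·arctan(κ/(aσ))` is a nonnegative integer, where
`σ = √(1 − (κ/a)²)`. -/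
theorem block_bound_state_iff (a b : ℝ) (ha : 0 < a) (hb : 0 < b)
    (κ : ℝ) (hκ0 : 0 < κ) (hκa : κ < a)
    (σ : ℝ) (hσ : σ = Real.sqrt (1 - (κ / a) ^ 2)) :
    (∃ φ : ℝ → ℝ, φ ≠ 0 ∧ ContDiff ℝ 1 φ ∧
        (∀ x : ℝ, x ∉ ({-b, 0} : Set ℝ) → DifferentiableAt ℝ (deriv φ) x) ∧
        Integrable (fun x : ℝ => (φ x) ^ 2) ∧
        (∀ x : ℝ, x ∉ ({-b, 0} : Set ℝ) →
          -(deriv (deriv φ) x) + VblockR a b x * φ x = -κ ^ 2 * φ x)) ↔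
      (∃ m : ℕ, a * b / Real.pi * σ - 2 / Real.pi * Real.arctan (κ / (a * σ)) = (m : ℝ)) := by
  have hσ2 : 0 < 1 - (κ / a) ^ 2 := by
    rw [sub_pos, div_pow, div_lt_one (by positivity)]
    exact pow_lt_pow_left₀ hκa hκ0.le two_ne_zero
  set k := a * σ
  have hk : 0 < k := mul_pos ha (hσ ▸ sqrt_pos.2 hσ2)
  have hkκ : k ^ 2 = a ^ 2 - κ ^ 2 := by
    rw [mul_pow, hσ, sq_sqrt hσ2.le]
    field_simp
  have hθ : -π < k * b - 2 * arctan (κ / k) := by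
    nlinarith [arctan_lt_pi_div_two (κ / k), mul_pos hk hb]
  have hrhs (m : ℝ) : a * b / π * σ - 2 / π * arctan (κ / k) = m ↔
      k * b - 2 * arctan (κ / k) = m * π := by
    rw [← div_eq_iff pi_ne_zero]
    simp only [k]
    ring_nf
  simp_rw [hrhs, ← sin_eq_zero_iff_exists_nat hθ, ← wellMid'_zero_eq_iff b hk]
  constructor
  · rintro ⟨φ, hφ, hsol⟩
    obtain ⟨φ', h⟩ := exists_isL2Solution_iff.2 hsol
    exact h.wellMid'_zero_eq hφ hb hκ0 hk.ne' hkκ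
  · intro hmatch
    exact ⟨_, boundState_ne_zero hb, exists_isL2Solution_iff.1
      ⟨_, isL2Solution_boundState hb hκ0 hk.ne' hkκ hmatch⟩⟩
end
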